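/- Let K ⊂ ℝ² be a compact convex set with nonempty interior such that K = −K. Assume that (1,0) and (0,1) lie on the boundary of K, and that vol(K ∩ {(x,y) : x ≥ 0, y ≥ 0}) = vol(K ∩ {(x,y) : x ≤ 0, y ≥ 0}) = vol(K)/4. Then vol(K) · vol(K°) ≥ 8, where vol denotes 2-dimensional Lebesgue measure. -/

import Mathlib

/-!
On the upper half of `K`, the triangles `0, (1,0), x` and `0, x, (0,1)` (or `0, (0,1), x` and
`0, x, (-1,0)`) lie in one of the two quadrant pieces of area `vol K / 4`, so
`|x₀| + |x₁| ≤ vol K / 2` on `K` and `K°` contains the square `(2 / vol K) • [-1,1]²`.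
Supporting lines of `K` at `(1,0)` and `(0,1)` give points `(1,s)` and `(t,1)` of `K°` with
`|s|, |t| ≤ 1`. With the vertices of the square they span a symmetric octagon inside `K°` of area
`8 / vol K`, independently of `s` and `t`.
-/

open MeasureTheory Real Set
open scoped RealInnerProductSpace

noncomputable section

/-- Euclidean plane. -/
abbrev E2 := EuclideanSpace ℝ (Fin 2)

/-- The point `(a, b)` of `ℝ²`. -/
def pt2 (a b : ℝ) : E2 := (WithLp.equiv 2 (Fin 2 → ℝ)).symm ![a, b]

/-- The polar body `K° = {y : ⟪x, y⟫ ≤ 1 for all x ∈ K}`. -/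
def polarBody2 (K : Set E2) : Set E2 := {y : E2 | ∀ x ∈ K, ⟪x, y⟫ ≤ 1}

/-- The square `[-1,1]²`. -/
def square : Set E2 := {x : E2 | ∀ i, x i ∈ Icc (-1:ℝ) 1}

open scoped ENNReal

section HalfSpaces

variable {E : Type*} [NormedAddCommGroup E] [InnerProductSpace ℝ E] [FiniteDimensional ℝ E]
  [MeasurableSpace E] [BorelSpace E] (μ : Measure E) [μ.IsAddHaarMeasure]

theorem measure_union_eq_add_of_inner_nonpos_of_nonneg {w : E} (hw : w ≠ 0) {s t : Set E}
    (htm : NullMeasurableSet t μ) (hs : ∀ x ∈ s, ⟪w, x⟫ ≤ 0)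
    (ht : ∀ x ∈ t, 0 ≤ ⟪w, x⟫) :
    μ (s ∪ t) = μ s + μ t := by
  refine measure_union₀ htm (measure_mono_null (t := (ℝ ∙ w)ᗮ) ?_ ?_)
  · rintro x ⟨hxs, hxt⟩
    exact Submodule.mem_orthogonal_singleton_iff_inner_right.2 (le_antisymm (hs x hxs) (ht x hxt))
  · refine Measure.addHaar_submodule μ _ fun h => hw ?_
    exact inner_self_eq_zero.1 (Submodule.mem_orthogonal_singleton_iff_inner_right.1
      (h ▸ Submodule.mem_top))

end HalfSpaces

theorem Convex.exists_le_one_eq_one_of_mem_frontier {E : Type*} [NormedAddCommGroup E]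
    [NormedSpace ℝ E] {K : Set E} (hK : Convex ℝ K) (h0 : 0 ∈ interior K) {z : E}
    (hz : z ∈ frontier K) : ∃ f : StrongDual ℝ E, (∀ x ∈ K, f x ≤ 1) ∧ f z = 1 := by
  obtain ⟨f, hf⟩ := geometric_hahn_banach_open_point hK.interior isOpen_interior hz.2
  have hfz : 0 < f z := by simpa using hf 0 h0
  have hle : ∀ x ∈ K, f x ≤ f z := by
    intro x hx
    have hx' : x ∈ closure (interior K) := by
      rw [hK.closure_interior_eq_closure_of_nonempty_interior ⟨0, h0⟩]
      exact subset_closure hx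
    exact closure_minimal (fun y hy => (hf y hy).le) (isClosed_le f.continuous continuous_const) hx'
  refine ⟨(f z)⁻¹ • f, fun x hx => ?_, by simp [hfz.ne']⟩
  simpa [inv_mul_le_iff₀ hfz] using hle x hx

theorem Convex.zero_mem_interior_of_eq_neg {E : Type*} [NormedAddCommGroup E] [NormedSpace ℝ E]
    {K : Set E} (hK : Convex ℝ K) (hsymm : K = -K) (hint : (interior K).Nonempty) :
    0 ∈ interior K := by
  obtain ⟨a, ha⟩ := hint
  have hna : -a ∈ interior K := by
    have h : -a ∈ Homeomorph.neg E ⁻¹' interior K := by simpa using ha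
    rw [(Homeomorph.neg E).preimage_interior] at h
    rw [hsymm]
    exact h
  simpa using hK.interior ha hna (a := 1 / 2) (b := 1 / 2) (by norm_num) (by norm_num) (by norm_num)

@[simp] lemma pt2_apply_zero (a b : ℝ) : pt2 a b 0 = a := rfl

@[simp] lemma pt2_apply_one (a b : ℝ) : pt2 a b 1 = b := rfl

lemma pt2_eta (x : E2) : pt2 (x 0) (x 1) = x := by
  ext i; fin_cases i <;> rfl

@[simp] lemma pt2_eq_zero_iff {a b : ℝ} : pt2 a b = 0 ↔ a = 0 ∧ b = 0 := by
  refine ⟨fun h => ⟨congrArg (· 0) h, congrArg (· 1) h⟩, ?_⟩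
  rintro ⟨rfl, rfl⟩
  ext i; fin_cases i <;> rfl

lemma E2.inner_eq (x y : E2) : ⟪x, y⟫ = x 0 * y 0 + x 1 * y 1 := by
  simp [PiLp.inner_apply, Fin.sum_univ_two, mul_comm]

@[simp] lemma neg_pt2 (a b : ℝ) : -pt2 a b = pt2 (-a) (-b) := by
  ext i; fin_cases i <;> rfl

lemma E2.isLinearMap_apply (i : Fin 2) : IsLinearMap ℝ fun p : E2 => p i :=
  (EuclideanSpace.proj i : E2 →L[ℝ] ℝ).toLinearMap.isLinear

lemma convex_setOf_abs_le (i j : Fin 2) : Convex ℝ {p : E2 | |p i| ≤ p j} := by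
  intro x hx y hy a b ha hb hab
  simp only [mem_ofPred_eq, PiLp.add_apply, PiLp.smul_apply, smul_eq_mul] at hx hy ⊢
  calc |a * x i + b * y i| ≤ a * |x i| + b * |y i| := by
        refine (abs_add_le _ _).trans ?_
        rw [abs_mul, abs_mul, abs_of_nonneg ha, abs_of_nonneg hb]
    _ ≤ a * x j + b * y j := by gcongr

def cross2 (a b : E2) : ℝ := a 0 * b 1 - a 1 * b 0

def stdTriangle : Set E2 := {x : E2 | 0 ≤ x 0 ∧ 0 ≤ x 1 ∧ x 0 + x 1 ≤ 1}

lemma volume_unitSquare : volume {x : E2 | ∀ i, x i ∈ Icc (0 : ℝ) 1} = 1 := by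
  have : {x : E2 | ∀ i, x i ∈ Icc (0 : ℝ) 1} =
      (MeasurableEquiv.toLp 2 (Fin 2 → ℝ)).symm ⁻¹' Set.pi univ fun _ => Icc 0 1 := by
    ext x; simp only [mem_preimage, Set.mem_pi, mem_univ, true_implies]; rfl
  rw [this, (EuclideanSpace.volume_preserving_symm_measurableEquiv_toLp (Fin 2)).measure_preimage
    (MeasurableSet.univ_pi fun _ => measurableSet_Icc).nullMeasurableSet, volume_pi_pi]
  simp

lemma one_le_two_mul_volume_stdTriangle : 1 ≤ 2 * volume stdTriangle := by
  -- the second piece is the reflected triangle `(1,1) - stdTriangle`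
  have hcover : {x : E2 | ∀ i, x i ∈ Icc (0 : ℝ) 1} ⊆
      stdTriangle ∪ (fun x => -pt2 1 1 + x) ⁻¹' (-stdTriangle) := by
    intro x hx
    have h0 := hx 0; have h1 := hx 1
    simp only [mem_Icc] at h0 h1
    by_cases h : x 0 + x 1 ≤ 1
    · exact Or.inl ⟨h0.1, h1.1, h⟩
    · refine Or.inr ⟨?_, ?_, ?_⟩ <;>
        simp only [PiLp.add_apply, PiLp.neg_apply, neg_pt2, pt2_apply_zero, pt2_apply_one] <;>
        linarith
  calc (1 : ℝ≥0∞) = volume {x : E2 | ∀ i, x i ∈ Icc (0 : ℝ) 1} := volume_unitSquare.symm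
    _ ≤ volume stdTriangle + volume ((fun x => -pt2 1 1 + x) ⁻¹' (-stdTriangle)) :=
      (measure_mono hcover).trans (measure_union_le _ _)
    _ = 2 * volume stdTriangle := by rw [measure_preimage_add, Measure.measure_neg, two_mul]

lemma smul_add_smul_mem_convexHull {x : E2} (hx : x ∈ stdTriangle) (a b : E2) :
    x 0 • a + x 1 • b ∈ convexHull ℝ ({0, a, b} : Set E2) := by
  obtain ⟨h0, h1, h01⟩ := hx
  have hsum := (convex_convexHull ℝ ({0, a, b} : Set E2)).sum_mem (t := Finset.univ)
    (w := ![1 - x 0 - x 1, x 0, x 1]) (z := ![0, a, b])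
    (by
      intro i _
      fin_cases i <;> simp only [Fin.zero_eta, Fin.mk_one, Fin.reduceFinMk, Matrix.cons_val] <;>
        linarith)
    (by simp only [Fin.sum_univ_three, Matrix.cons_val_zero, Matrix.cons_val_one,
      Matrix.cons_val_two, Matrix.head_cons, Matrix.tail_cons]; ring)
    (by intro i _; fin_cases i <;> exact subset_convexHull ℝ _ (by simp))
  simpa [Fin.sum_univ_three] using hsum

theorem ofReal_cross2_div_two_le_volume_convexHull (a b : E2) :
    ENNReal.ofReal (cross2 a b / 2) ≤ volume (convexHull ℝ ({0, a, b} : Set E2)) := by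
  let e := (EuclideanSpace.basisFun (Fin 2) ℝ).toBasis
  let L : E2 →ₗ[ℝ] E2 := e.constr ℝ ![a, b]
  have hL : ∀ x, L x = x 0 • a + x 1 • b := fun x => by
    simp [L, e, Fin.sum_univ_two]
  have hdet : LinearMap.det L = cross2 a b := by
    rw [← LinearMap.det_toMatrix e, Matrix.det_fin_two]
    simp [e, L, LinearMap.toMatrix_apply, cross2, mul_comm]
  have himage : L '' stdTriangle ⊆ convexHull ℝ ({0, a, b} : Set E2) := by
    rintro - ⟨x, hx, rfl⟩
    rw [hL]
    exact smul_add_smul_mem_convexHull hx a b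
  calc ENNReal.ofReal (cross2 a b / 2)
      ≤ ENNReal.ofReal |cross2 a b| * 2⁻¹ := by
        rw [ENNReal.ofReal_div_of_pos two_pos, ENNReal.ofReal_ofNat, div_eq_mul_inv]
        gcongr
        exact le_abs_self _
    _ ≤ ENNReal.ofReal |LinearMap.det L| * volume stdTriangle := by
        rw [hdet]
        gcongr
        rw [ENNReal.inv_le_iff_le_mul (by simp) (by simp)]
        exact one_le_two_mul_volume_stdTriangle
    _ = volume (L '' stdTriangle) := (Measure.addHaar_image_linearMap volume L _).symm
    _ ≤ _ := measure_mono himage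

lemma cross2_pt2 (a b c d : ℝ) : cross2 (pt2 a b) (pt2 c d) = a * d - b * c := rfl

@[simp] lemma cross2_zero_right (a : E2) : cross2 a 0 = 0 := by simp [cross2]

@[simp] lemma cross2_self (a : E2) : cross2 a a = 0 := by rw [cross2]; ring

lemma inner_pt2_eq_cross2 (b p : E2) : ⟪pt2 (-b 1) (b 0), p⟫ = cross2 b p := by
  simp only [E2.inner_eq, cross2, pt2_apply_zero, pt2_apply_one]; ring

theorem ofReal_le_volume_of_fan {C : Set E2} (hC : Convex ℝ C) {a b c : E2} (h0 : 0 ∈ C)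
    (ha : a ∈ C) (hb : b ∈ C) (hc : c ∈ C) (hab : 0 ≤ cross2 a b) (hbc : 0 ≤ cross2 b c) :
    ENNReal.ofReal ((cross2 a b + cross2 b c) / 2) ≤ volume C := by
  rcases eq_or_ne b 0 with rfl | hb0
  · simp [cross2]
  -- `⟪w, ·⟫ = cross2 b`, so the line `ℝ b` separates the two triangles
  set w := pt2 (-b 1) (b 0)
  have hw0 : w ≠ 0 := fun hw => hb0 <| by
    obtain ⟨h1, h0⟩ := pt2_eq_zero_iff.1 hw
    rw [← pt2_eta b, pt2_eq_zero_iff]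
    exact ⟨h0, neg_eq_zero.1 h1⟩
  have hlin : IsLinearMap ℝ fun p => ⟪w, p⟫ := (innerₛₗ ℝ w).isLinear
  have hcross : cross2 b a = -cross2 a b := by rw [cross2, cross2]; ring
  have hleft : convexHull ℝ {0, a, b} ⊆ {p | ⟪w, p⟫ ≤ 0} :=
    convexHull_min (by simp [insert_subset_iff, w, inner_pt2_eq_cross2, hcross, hab])
      (convex_halfSpace_le hlin 0)
  have hright : convexHull ℝ {0, b, c} ⊆ {p | 0 ≤ ⟪w, p⟫} :=
    convexHull_min (by simp [insert_subset_iff, w, inner_pt2_eq_cross2, hbc])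
      (convex_halfSpace_ge hlin 0)
  have hsub (x y : E2) (hx : x ∈ C) (hy : y ∈ C) : convexHull ℝ {0, x, y} ⊆ C :=
    convexHull_min (by simp [insert_subset_iff, h0, hx, hy]) hC
  calc ENNReal.ofReal ((cross2 a b + cross2 b c) / 2)
      = ENNReal.ofReal (cross2 a b / 2) + ENNReal.ofReal (cross2 b c / 2) := by
        rw [add_div, ENNReal.ofReal_add (by positivity) (by positivity)]
    _ ≤ volume (convexHull ℝ {0, a, b}) + volume (convexHull ℝ {0, b, c}) :=
        add_le_add (ofReal_cross2_div_two_le_volume_convexHull a b)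
          (ofReal_cross2_div_two_le_volume_convexHull b c)
    _ = volume (convexHull ℝ {0, a, b} ∪ convexHull ℝ {0, b, c}) :=
        (measure_union_eq_add_of_inner_nonpos_of_nonneg volume hw0
          ((convex_convexHull ℝ _).nullMeasurableSet _) hleft hright).symm
    _ ≤ volume C := measure_mono (union_subset (hsub a b ha hb) (hsub b c hb hc))

theorem two_mul_volume_inter_cones_le {S : Set E2} (hS : NullMeasurableSet S volume)
    (hneg : ∀ x ∈ S, -x ∈ S) :
    2 * (volume (S ∩ {p : E2 | |p 0| ≤ p 1}) + volume (S ∩ {p : E2 | |p 1| ≤ p 0})) ≤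
      volume S := by
  set top := S ∩ {p : E2 | |p 0| ≤ p 1}
  set right := S ∩ {p : E2 | |p 1| ≤ p 0}
  have hcone (i j : Fin 2) : MeasurableSet {p : E2 | |p i| ≤ p j} :=
    (isClosed_le (by fun_prop) (by fun_prop)).measurableSet
  have hsplit : volume (top ∪ right) = volume top + volume right := by
    refine measure_union_eq_add_of_inner_nonpos_of_nonneg volume (w := pt2 1 (-1)) (by simp)
      (hS.inter (hcone 1 0).nullMeasurableSet) ?_ ?_ <;>
      rintro p ⟨-, hp⟩ <;> simp only [E2.inner_eq, pt2_apply_zero, pt2_apply_one] <;>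
      linarith [le_abs_self (p 0), le_abs_self (p 1), hp.out]
  have hdiag : ∀ p ∈ top ∪ right, 0 ≤ ⟪pt2 1 1, p⟫ := by
    rintro p (⟨-, hp⟩ | ⟨-, hp⟩) <;>
      simp only [E2.inner_eq, pt2_apply_zero, pt2_apply_one] <;>
      linarith [neg_abs_le (p 0), neg_abs_le (p 1), hp.out]
  have hhalves : volume (-(top ∪ right) ∪ (top ∪ right)) = 2 * volume (top ∪ right) := by
    rw [measure_union_eq_add_of_inner_nonpos_of_nonneg volume (w := pt2 1 1) (by simp)
      ((hS.inter (hcone 0 1).nullMeasurableSet).union (hS.inter (hcone 1 0).nullMeasurableSet))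
      (fun p hp => by simpa using hdiag (-p) hp) hdiag, Measure.measure_neg, two_mul]
  calc 2 * (volume top + volume right) = volume (-(top ∪ right) ∪ (top ∪ right)) := by
        rw [hhalves, hsplit]
    _ ≤ volume S := by
        refine measure_mono (union_subset ?_ (union_subset inter_subset_left inter_subset_left))
        rintro p (⟨hp, -⟩ | ⟨hp, -⟩) <;> simpa using hneg _ hp

/-- The diagonals cut the octagon with vertices `±(d,d), ±(-d,d), ±(1,s), ±(t,1)` into four
pieces, each a pair of triangles of total area `d`, whatever `s` and `t` are. -/
theorem ofReal_four_mul_le_volume_of_octagon {S : Set E2} (hS : Convex ℝ S)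
    (hneg : ∀ x ∈ S, -x ∈ S) (h0 : 0 ∈ S) {d s t : ℝ} (hd : 0 ≤ d) (hs : |s| ≤ 1)
    (ht : |t| ≤ 1) (hc₁ : pt2 d d ∈ S) (hc₂ : pt2 (-d) d ∈ S) (hu : pt2 1 s ∈ S)
    (hv : pt2 t 1 ∈ S) :
    ENNReal.ofReal (4 * d) ≤ volume S := by
  obtain ⟨hs₁, hs₂⟩ := abs_le.1 hs
  obtain ⟨ht₁, ht₂⟩ := abs_le.1 ht
  have hdd : |d| ≤ d := (abs_of_nonneg hd).le
  have htop : ENNReal.ofReal d ≤ volume (S ∩ {p : E2 | |p 0| ≤ p 1}) := by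
    convert ofReal_le_volume_of_fan (hS.inter (convex_setOf_abs_le 0 1)) (a := pt2 d d)
      (b := pt2 t 1) (c := pt2 (-d) d) ⟨h0, by simp⟩ ⟨hc₁, hdd⟩ ⟨hv, ht⟩
      ⟨hc₂, by simpa using hdd⟩ (by rw [cross2_pt2]; nlinarith)
      (by rw [cross2_pt2]; nlinarith) using 2
    rw [cross2_pt2, cross2_pt2]; ring
  have hright : ENNReal.ofReal d ≤ volume (S ∩ {p : E2 | |p 1| ≤ p 0}) := by
    convert ofReal_le_volume_of_fan (hS.inter (convex_setOf_abs_le 1 0)) (a := pt2 d (-d))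
      (b := pt2 1 s) (c := pt2 d d) ⟨h0, by simp⟩
      ⟨by simpa using hneg _ hc₂, by simpa using hdd⟩ ⟨hu, hs⟩ ⟨hc₁, hdd⟩
      (by rw [cross2_pt2]; nlinarith) (by rw [cross2_pt2]; nlinarith) using 2
    rw [cross2_pt2, cross2_pt2]; ring
  calc ENNReal.ofReal (4 * d) = 2 * (ENNReal.ofReal d + ENNReal.ofReal d) := by
        rw [← ENNReal.ofReal_add hd hd, ← ENNReal.ofReal_ofNat 2,
          ← ENNReal.ofReal_mul zero_le_two]
        ring_nf
    _ ≤ 2 * (volume (S ∩ {p : E2 | |p 0| ≤ p 1}) + volume (S ∩ {p : E2 | |p 1| ≤ p 0})) :=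
        by gcongr
    _ ≤ volume S := two_mul_volume_inter_cones_le (hS.nullMeasurableSet _) hneg

lemma convex_polarBody2 (K : Set E2) : Convex ℝ (polarBody2 K) := by
  intro y hy z hz a b ha hb hab x hx
  rw [inner_add_right, real_inner_smul_right, real_inner_smul_right]
  nlinarith [hy x hx, hz x hx]

lemma zero_mem_polarBody2 (K : Set E2) : 0 ∈ polarBody2 K := by
  intro x _
  simp

lemma neg_mem_polarBody2 {K : Set E2} (hK : ∀ x ∈ K, -x ∈ K) {y : E2}
    (hy : y ∈ polarBody2 K) : -y ∈ polarBody2 K := by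
  intro x hx
  simpa [inner_neg_right, ← inner_neg_left] using hy (-x) (hK x hx)

lemma pt2_mem_polarBody2 {K : Set E2} {c a b : ℝ} (hK : ∀ x ∈ K, c * (|x 0| + |x 1|) ≤ 1)
    (ha : |a| ≤ c) (hb : |b| ≤ c) : pt2 a b ∈ polarBody2 K := by
  intro x hx
  rw [E2.inner_eq, pt2_apply_zero, pt2_apply_one]
  calc x 0 * a + x 1 * b ≤ |x 0| * |a| + |x 1| * |b| := by
        rw [← abs_mul, ← abs_mul]; exact add_le_add (le_abs_self _) (le_abs_self _)
    _ ≤ |x 0| * c + |x 1| * c := by gcongr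
    _ ≤ 1 := by linarith [hK x hx]

lemma polarBody2_subset_closedBall {K : Set E2} {ε : ℝ} (hε : 0 < ε)
    (hK : Metric.closedBall 0 ε ⊆ K) : polarBody2 K ⊆ Metric.closedBall 0 ε⁻¹ := by
  intro y hy
  rw [mem_closedBall_zero_iff]
  rcases eq_or_ne y 0 with rfl | hy0
  · simp [hε.le]
  have hn : 0 < ‖y‖ := norm_pos_iff.2 hy0
  have hx : (ε / ‖y‖) • y ∈ K := hK <| by
    rw [mem_closedBall_zero_iff, norm_smul, Real.norm_of_nonneg (by positivity),
      div_mul_cancel₀ _ hn.ne']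
  have h := hy _ hx
  rw [real_inner_smul_left, real_inner_self_eq_norm_sq, div_mul_eq_mul_div, sq, ← mul_assoc,
    mul_div_assoc, div_self hn.ne', mul_one] at h
  rw [le_inv_comm₀ hn hε, inv_eq_one_div, le_div_iff₀ hn]
  linarith

lemma volume_polarBody2_ne_top {K : Set E2} (hK : 0 ∈ interior K) :
    volume (polarBody2 K) ≠ ⊤ := by
  obtain ⟨ε, hε, hball⟩ :=
    Metric.nhds_basis_closedBall.mem_iff.1 (mem_interior_iff_mem_nhds.1 hK)
  exact ne_top_of_le_ne_top measure_closedBall_lt_top.ne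
    (measure_mono (polarBody2_subset_closedBall hε hball))

lemma exists_mem_polarBody2_inner_eq_one {K : Set E2} (hK : Convex ℝ K) (h0 : 0 ∈ interior K)
    {z : E2} (hz : z ∈ frontier K) : ∃ u ∈ polarBody2 K, ⟪z, u⟫ = 1 := by
  obtain ⟨f, hfK, hfz⟩ := hK.exists_le_one_eq_one_of_mem_frontier h0 hz
  refine ⟨(InnerProductSpace.toDual ℝ E2).symm f, fun x hx => ?_, ?_⟩ <;>
    rw [real_inner_comm, InnerProductSpace.toDual_symm_apply]
  exacts [hfK x hx, hfz]

theorem ofReal_abs_add_abs_div_two_le_of_volume_le {K : Set E2} (hK : Convex ℝ K)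
    (hneg : ∀ x ∈ K, -x ∈ K) (h0 : 0 ∈ K) (he₀ : pt2 1 0 ∈ K) (he₁ : pt2 0 1 ∈ K)
    {V : ℝ≥0∞} (h₁ : volume (K ∩ {p : E2 | 0 ≤ p 0 ∧ 0 ≤ p 1}) ≤ V)
    (h₂ : volume (K ∩ {p : E2 | p 0 ≤ 0 ∧ 0 ≤ p 1}) ≤ V) {x : E2} (hx : x ∈ K) :
    ENNReal.ofReal ((|x 0| + |x 1|) / 2) ≤ V := by
  have hQ₁ : Convex ℝ (K ∩ {p : E2 | 0 ≤ p 0 ∧ 0 ≤ p 1}) :=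
    hK.inter ((convex_halfSpace_ge (E2.isLinearMap_apply 0) 0).inter
      (convex_halfSpace_ge (E2.isLinearMap_apply 1) 0))
  have hQ₂ : Convex ℝ (K ∩ {p : E2 | p 0 ≤ 0 ∧ 0 ≤ p 1}) :=
    hK.inter ((convex_halfSpace_le (E2.isLinearMap_apply 0) 0).inter
      (convex_halfSpace_ge (E2.isLinearMap_apply 1) 0))
  have hupper : ∀ y ∈ K, 0 ≤ y 1 → ENNReal.ofReal ((|y 0| + |y 1|) / 2) ≤ V := by
    intro y hy hy₁
    rcases le_total 0 (y 0) with hy₀ | hy₀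
    · calc ENNReal.ofReal ((|y 0| + |y 1|) / 2)
          = ENNReal.ofReal ((cross2 (pt2 1 0) y + cross2 y (pt2 0 1)) / 2) := by
            simp [cross2, abs_of_nonneg hy₀, abs_of_nonneg hy₁, add_comm]
        _ ≤ volume (K ∩ {p : E2 | 0 ≤ p 0 ∧ 0 ≤ p 1}) :=
            ofReal_le_volume_of_fan hQ₁ ⟨h0, by simp⟩ ⟨he₀, by simp⟩
              ⟨hy, hy₀, hy₁⟩ ⟨he₁, by simp⟩ (by simpa [cross2]) (by simpa [cross2])
        _ ≤ V := h₁
    · calc ENNReal.ofReal ((|y 0| + |y 1|) / 2)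
          = ENNReal.ofReal ((cross2 (pt2 0 1) y + cross2 y (pt2 (-1) 0)) / 2) := by
            simp [cross2, abs_of_nonpos hy₀, abs_of_nonneg hy₁]
        _ ≤ volume (K ∩ {p : E2 | p 0 ≤ 0 ∧ 0 ≤ p 1}) :=
            ofReal_le_volume_of_fan hQ₂ ⟨h0, by simp⟩ ⟨he₁, by simp⟩
              ⟨hy, hy₀, hy₁⟩ ⟨by simpa using hneg _ he₀, by simp⟩ (by simpa [cross2])
              (by simpa [cross2])
        _ ≤ V := h₂
  rcases le_total 0 (x 1) with hx₁ | hx₁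
  · exact hupper x hx hx₁
  · simpa using hupper (-x) (hneg x hx) (by simpa using hx₁)

theorem ofReal_four_mul_le_volume_polarBody2 {K : Set E2} (hKc : IsClosed K)
    (hK : Convex ℝ K) (hneg : ∀ x ∈ K, -x ∈ K) (h0 : 0 ∈ interior K)
    (hB : pt2 1 0 ∈ frontier K) (hC : pt2 0 1 ∈ frontier K) {d : ℝ} (hd₀ : 0 ≤ d)
    (hd : ∀ x ∈ K, d * (|x 0| + |x 1|) ≤ 1) :
    ENNReal.ofReal (4 * d) ≤ volume (polarBody2 K) := by
  have he₀ : pt2 1 0 ∈ K := hKc.frontier_subset hB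
  have he₁ : pt2 0 1 ∈ K := hKc.frontier_subset hC
  obtain ⟨u, hu, hu₀⟩ := exists_mem_polarBody2_inner_eq_one hK h0 hB
  obtain ⟨v, hv, hv₁⟩ := exists_mem_polarBody2_inner_eq_one hK h0 hC
  have hs : |u 1| ≤ 1 := abs_le.2 ⟨neg_le.1 (by simpa [E2.inner_eq] using hu _ (hneg _ he₁)),
    by simpa [E2.inner_eq] using hu _ he₁⟩
  have ht : |v 0| ≤ 1 := abs_le.2 ⟨neg_le.1 (by simpa [E2.inner_eq] using hv _ (hneg _ he₀)),
    by simpa [E2.inner_eq] using hv _ he₀⟩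
  have hu' : pt2 1 (u 1) ∈ polarBody2 K := by
    rwa [← show u 0 = 1 by simpa [E2.inner_eq] using hu₀, pt2_eta]
  have hv' : pt2 (v 0) 1 ∈ polarBody2 K := by
    rwa [← show v 1 = 1 by simpa [E2.inner_eq] using hv₁, pt2_eta]
  have hdd : |d| ≤ d := (abs_of_nonneg hd₀).le
  exact ofReal_four_mul_le_volume_of_octagon (convex_polarBody2 K)
    (fun y => neg_mem_polarBody2 hneg) (zero_mem_polarBody2 K) hd₀ hs ht
    (pt2_mem_polarBody2 hd hdd hdd) (pt2_mem_polarBody2 hd (by rwa [abs_neg]) hdd) hu' hv'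

/-- Proposition 2.2 (inequality part): if a centrally symmetric convex body `K ⊂ ℝ²` has
`(1,0)` and `(0,1)` on its boundary and the two upper quadrant pieces of `K` each have
area `vol(K)/4`, then `vol(K) · vol(K°) ≥ 8`. -/
theorem mahler_dim2_normalized
    (K : Set E2) (hKcomp : IsCompact K) (hKconv : Convex ℝ K)
    (hKint : (interior K).Nonempty) (hKsymm : K = -K)
    (hB : pt2 1 0 ∈ frontier K) (hC : pt2 0 1 ∈ frontier K)
    (hK1 : volume (K ∩ {p : E2 | 0 ≤ p 0 ∧ 0 ≤ p 1}) = volume K / 4)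
    (hK2 : volume (K ∩ {p : E2 | p 0 ≤ 0 ∧ 0 ≤ p 1}) = volume K / 4) :
    8 ≤ (volume K).toReal * (volume (polarBody2 K)).toReal := by
  set A := (volume K).toReal
  have hneg : ∀ x ∈ K, -x ∈ K := fun x hx => by rw [hKsymm] at hx; exact hx
  have h0 : (0 : E2) ∈ interior K := hKconv.zero_mem_interior_of_eq_neg hKsymm hKint
  have hl1 : ∀ x ∈ K, |x 0| + |x 1| ≤ A / 2 := by
    intro x hx
    have h := ofReal_abs_add_abs_div_two_le_of_volume_le hKconv hneg (interior_subset h0)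
      (hKcomp.isClosed.frontier_subset hB) (hKcomp.isClosed.frontier_subset hC) hK1.le hK2.le hx
    rw [ENNReal.ofReal_le_iff_le_toReal (ENNReal.div_ne_top hKcomp.measure_lt_top.ne (by simp)),
      ENNReal.toReal_div, ENNReal.toReal_ofNat] at h
    linarith
  have hA : 2 ≤ A := by
    linarith [show 1 ≤ A / 2 by simpa using hl1 _ (hKcomp.isClosed.frontier_subset hB)]
  have hP := ofReal_four_mul_le_volume_polarBody2 hKcomp.isClosed hKconv hneg h0 hB hC (d := 2 / A)
    (by positivity) fun x hx => by
      rw [div_mul_eq_mul_div, div_le_one (by positivity)]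
      linarith [hl1 x hx]
  rw [ENNReal.ofReal_le_iff_le_toReal (volume_polarBody2_ne_top h0)] at hP
  calc (8 : ℝ) = A * (4 * (2 / A)) := by field_simp; ring
    _ ≤ A * (volume (polarBody2 K)).toReal := by gcongr
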